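/- Let g be the 3-dimensional Lie algebra with basis {s, d₁, d₂} and brackets [s,d₁]=d₂, [s,d₂]=−d₁, [d₁,d₂]=0, and let r = a·s∧d₁ + b·s∧d₂ + c·d₁∧d₂ with coboundary ξ(x) = ad_x r. Then the following are equivalent: (i) ad_s² ξ(s) = 0; (ii) a = b = 0; (iii) [r,r] = 0. -/

import Mathlib

/-!
`ad_s` turns `s∧d₁` into `s∧d₂` and `s∧d₂` into `-s∧d₁` and kills `d₁∧d₂`, so
`ad_s³ r = c • s∧d₁ - a • s∧d₂`. Likewise only the `s∧dᵢ` components of `r` contribute to the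
Schouten bracket: `[r, r] = 2 (a² + c²) • s∧d₁∧d₂`. Both conditions therefore amount to
`a = c = 0`, because the top form `s∧d₁∧d₂` of the basis `(s, d₁, d₂)` does not vanish.
-/

open ExteriorAlgebra

namespace ExteriorAlgebra

variable {R M : Type*} [CommRing R] [AddCommGroup M] [Module R M]

-- `b.det` extends to a linear form on the exterior algebra taking the value `1` here.
theorem ιMulti_basis_ne_zero [Nontrivial R] {n : ℕ} (b : Module.Basis (Fin n) R M) :
    ιMulti R n b ≠ 0 := by
  intro h
  have := liftAlternating_apply_ιMulti (Function.update 0 n b.det) b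
  rw [h, map_zero, Function.update_self, b.det_self] at this
  exact zero_ne_one this

theorem ι_mul_ι_comm (x y : M) : ι R x * ι R y = -(ι R y * ι R x) :=
  eq_neg_of_add_eq_zero_left (ι_add_mul_swap x y)

theorem ι_mul_ι_mul_comm (x y : M) (t : ExteriorAlgebra R M) :
    ι R x * (ι R y * t) = -(ι R y * (ι R x * t)) := by
  rw [← mul_assoc, ι_mul_ι_comm, neg_mul, mul_assoc]

theorem ι_mul_ι_mul_self (x : M) (t : ExteriorAlgebra R M) : ι R x * (ι R x * t) = 0 := by
  rw [← mul_assoc, ι_sq_zero, zero_mul]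

theorem eq_zero_of_smul_sub_smul_eq_zero {K V : Type*} [Field K] [AddCommGroup V] [Module K V]
    {x y z : V} (hxyz : ι K x * ι K y * ι K z ≠ 0) {a c : K}
    (h : c • (ι K x * ι K y) - a • (ι K x * ι K z) = 0) : a = 0 ∧ c = 0 := by
  -- right multiplication by `ι z`, resp. `ι y`, leaves `c • x∧y∧z`, resp. `a • x∧y∧z`
  have hz := congrArg (· * ι K z) h
  have hy := congrArg (· * ι K y) h
  simp only [sub_mul, smul_mul_assoc, mul_assoc, ι_sq_zero, mul_zero, smul_zero, sub_zero,
    zero_mul] at hz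
  simp only [sub_mul, smul_mul_assoc, mul_assoc, ι_sq_zero, mul_zero, smul_zero, zero_sub,
    zero_mul, ι_mul_ι_comm (R := K) z y, mul_neg, smul_neg, neg_neg] at hy
  rw [mul_assoc] at hxyz
  exact ⟨(smul_eq_zero.mp hy).resolve_right hxyz, (smul_eq_zero.mp hz).resolve_right hxyz⟩

end ExteriorAlgebra

section

variable {R L : Type*} [CommRing R] [LieRing L] [LieAlgebra R L] {s d1 d2 : L}

theorem ad_cube_eq
    (A : L →ₗ[R] ExteriorAlgebra R L →ₗ[R] ExteriorAlgebra R L)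
    (hA : ∀ x u v : L, A x (ι R u * ι R v) = ι R ⁅x, u⁆ * ι R v + ι R u * ι R ⁅x, v⁆)
    (h1 : ⁅s, d1⁆ = d2) (h2 : ⁅s, d2⁆ = -d1) (a c e : R) :
    A s (A s (A s (a • (ι R s * ι R d1) + c • (ι R s * ι R d2) + e • (ι R d1 * ι R d2)))) =
      c • (ι R s * ι R d1) - a • (ι R s * ι R d2) := by
  have hsd1 : A s (ι R s * ι R d1) = ι R s * ι R d2 := by simp [hA, h1]
  have hsd2 : A s (ι R s * ι R d2) = -(ι R s * ι R d1) := by simp [hA, h2]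
  have hd1d2 : A s (ι R d1 * ι R d2) = 0 := by simp [hA, h1, h2]
  simp only [map_add, map_smul, map_neg, hsd1, hsd2, hd1d2, smul_zero, add_zero]
  module

theorem schouten_self_eq
    (S : ExteriorAlgebra R L →ₗ[R] ExteriorAlgebra R L →ₗ[R] ExteriorAlgebra R L)
    (hS : ∀ x1 x2 y1 y2 : L, S (ι R x1 * ι R x2) (ι R y1 * ι R y2) =
      ι R ⁅x1, y1⁆ * ι R x2 * ι R y2 - ι R ⁅x1, y2⁆ * ι R x2 * ι R y1
        - ι R ⁅x2, y1⁆ * ι R x1 * ι R y2 + ι R ⁅x2, y2⁆ * ι R x1 * ι R y1)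
    (h1 : ⁅s, d1⁆ = d2) (h2 : ⁅s, d2⁆ = -d1) (h3 : ⁅d1, d2⁆ = 0) (a c e : R) :
    S (a • (ι R s * ι R d1) + c • (ι R s * ι R d2) + e • (ι R d1 * ι R d2))
      (a • (ι R s * ι R d1) + c • (ι R s * ι R d2) + e • (ι R d1 * ι R d2)) =
      (2 * (a * a) + 2 * (c * c)) • (ι R s * ι R d1 * ι R d2) := by
  have h1' : ⁅d1, s⁆ = -d2 := by rw [← lie_skew, h1]
  have h2' : ⁅d2, s⁆ = d1 := by rw [← lie_skew, h2, neg_neg]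
  have h3' : ⁅d2, d1⁆ = 0 := by rw [← lie_skew, h3, neg_zero]
  -- the oriented swaps sort every monomial into the order `s, d1, d2`
  simp only [map_add, map_smul, LinearMap.add_apply, LinearMap.smul_apply, hS, lie_self,
    h1, h2, h3, h1', h2', h3', map_neg, map_zero, mul_assoc, zero_mul, neg_mul, mul_neg,
    ι_mul_ι_comm (R := R) d1 s, ι_mul_ι_comm (R := R) d2 s, ι_mul_ι_comm (R := R) d2 d1,
    ι_mul_ι_mul_comm (R := R) d1 s, ι_mul_ι_mul_self,
    ι_sq_zero, neg_neg, mul_zero, neg_zero]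
  module

end

/-- For the 3-dimensional Lie algebra with basis `{s, d₁, d₂}`, brackets
`[s,d₁]=d₂`, `[s,d₂]=−d₁`, `[d₁,d₂]=0`, and `r = a·s∧d₁ + b·s∧d₂ + c·d₁∧d₂` with
coboundary `ξ(x) = ad_x r`, the following are equivalent:
(i) `ad_s² ξ(s) = 0`; (ii) `a = b = 0`; (iii) `[r,r] = 0`. -/
theorem stmt_7 {L : Type*} [LieRing L] [LieAlgebra ℝ L]
    (s d1 d2 : L) (b : Module.Basis (Fin 3) ℝ L)
    (hb0 : b 0 = s) (hb1 : b 1 = d1) (hb2 : b 2 = d2)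
    (h1 : ⁅s, d1⁆ = d2) (h2 : ⁅s, d2⁆ = -d1) (h3 : ⁅d1, d2⁆ = 0)
    -- the algebraic Schouten bracket on bivectors
    (S : ExteriorAlgebra ℝ L →ₗ[ℝ] ExteriorAlgebra ℝ L →ₗ[ℝ] ExteriorAlgebra ℝ L)
    (hS : ∀ x1 x2 y1 y2 : L, S (ι ℝ x1 * ι ℝ x2) (ι ℝ y1 * ι ℝ y2) =
      ι ℝ ⁅x1, y1⁆ * ι ℝ x2 * ι ℝ y2 - ι ℝ ⁅x1, y2⁆ * ι ℝ x2 * ι ℝ y1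
        - ι ℝ ⁅x2, y1⁆ * ι ℝ x1 * ι ℝ y2 + ι ℝ ⁅x2, y2⁆ * ι ℝ x1 * ι ℝ y1)
    -- the derivation extension of `ad` to bivectors
    (A : L →ₗ[ℝ] ExteriorAlgebra ℝ L →ₗ[ℝ] ExteriorAlgebra ℝ L)
    (hA : ∀ x u v : L, A x (ι ℝ u * ι ℝ v) = ι ℝ ⁅x, u⁆ * ι ℝ v + ι ℝ u * ι ℝ ⁅x, v⁆)
    (a c e : ℝ) (r : ExteriorAlgebra ℝ L)
    (hr : r = a • (ι ℝ s * ι ℝ d1) + c • (ι ℝ s * ι ℝ d2) + e • (ι ℝ d1 * ι ℝ d2)) :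
    (A s (A s (A s r)) = 0 ↔ (a = 0 ∧ c = 0)) ∧
      ((a = 0 ∧ c = 0) ↔ S r r = 0) := by
  have hT : ι ℝ s * ι ℝ d1 * ι ℝ d2 ≠ 0 := by
    simpa [ιMulti_apply, List.ofFn_succ, Matrix.vecTail, mul_assoc, hb0, hb1, hb2] using
      ιMulti_basis_ne_zero b
  subst hr
  rw [ad_cube_eq A hA h1 h2, schouten_self_eq S hS h1 h2 h3, smul_eq_zero, or_iff_left hT]
  refine ⟨⟨eq_zero_of_smul_sub_smul_eq_zero hT, ?_⟩, ⟨?_, fun h => ?_⟩⟩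
  · rintro ⟨rfl, rfl⟩
    simp
  · rintro ⟨rfl, rfl⟩
    simp
  · constructor <;> nlinarith [sq_nonneg a, sq_nonneg c]
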